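/- With C_n(x) the interpolating polynomials for iterated composition of f(t) = t + ∑_{i≥2} a_i t^i (so f^{∘k}(t) = ∑ C_i(k) t^i for all k ∈ ℕ), the finite difference satisfies C_n(k+1) − C_n(k) = [t^n] ∑_{i≥2} a_i (∑_{j≥1} C_j(k) t^j)^i, and consequently C_n(x+1) − C_n(x) is a polynomial of degree at most n−2 in x. -/

import Mathlib

open PowerSeries

lemma delta_natDegree_le {A : Type*} [CommRing A] (p : Polynomial A) :
    (p.comp (Polynomial.X + 1) - p).natDegree ≤ p.natDegree - 1 := by
  rcases subsingleton_or_nontrivial A with hA | hA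
  · simp [Subsingleton.elim (p.comp (Polynomial.X + 1) - p) 0]
  have hq : (Polynomial.X + 1 : Polynomial A).natDegree = 1 := by
    simpa using Polynomial.natDegree_X_add_C (1 : A)
  have hlc : (Polynomial.X + 1 : Polynomial A).leadingCoeff = 1 := by
    simpa using (Polynomial.monic_X_add_C (1 : A)).leadingCoeff
  rcases Nat.eq_zero_or_pos p.natDegree with hd | hd
  · have : p = Polynomial.C (p.coeff 0) := Polynomial.eq_C_of_natDegree_eq_zero hd
    rw [this]; simp
  rw [Polynomial.natDegree_le_iff_coeff_eq_zero]
  intro N hN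
  have hN' : p.natDegree ≤ N := by omega
  rw [Polynomial.coeff_sub]
  rcases eq_or_lt_of_le hN' with hEq | hlt
  · have h1 := Polynomial.coeff_comp_degree_mul_degree (p := p) (q := Polynomial.X + 1)
      (by rw [hq]; omega)
    rw [hq, mul_one, hlc, one_pow, mul_one] at h1
    rw [← hEq, h1, Polynomial.coeff_natDegree, sub_self]
  · have h2 : (p.comp (Polynomial.X + 1)).natDegree ≤ p.natDegree := by
      have := Polynomial.natDegree_comp_le (p := p) (q := Polynomial.X + 1)
      rwa [hq, mul_one] at this
    rw [Polynomial.coeff_eq_zero_of_natDegree_lt (lt_of_le_of_lt h2 hlt),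
      Polynomial.coeff_eq_zero_of_natDegree_lt hlt, sub_self]


/-- Composition `f ∘ g` of formal power series, valid when `g` has zero constant term. -/
noncomputable def psComp {A : Type*} [CommRing A] (f g : PowerSeries A) : PowerSeries A :=
  PowerSeries.mk fun n =>
    ∑ i ∈ Finset.range (n + 1), PowerSeries.coeff (R := A) i f * PowerSeries.coeff (R := A) n (g ^ i)

/-- The iterates `f^{∘0} = t`, `f^{∘(k+1)} = f ∘ f^{∘k}`. -/
noncomputable def psIter {A : Type*} [CommRing A] (f : PowerSeries A) : ℕ → PowerSeries A
  | 0 => PowerSeries.X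
  | k + 1 => psComp f (psIter f k)

/-- with `Cₙ` the interpolating polynomials of the iterated composition of
`f(t) = t + ∑_{i≥2} aᵢtⁱ` (so `f^{∘k} = ∑_{i≥1} Cᵢ(k)tⁱ`, `deg Cₙ ≤ n − 1`), the finite
difference satisfies `Cₙ(k+1) − Cₙ(k) = [tⁿ] ∑_{i≥2} aᵢ (∑_{j≥1} Cⱼ(k)tʲ)ⁱ` (only
`2 ≤ i ≤ n` contribute), and consequently `Cₙ(x+1) − Cₙ(x)` has degree at most `n − 2`. -/
theorem stmt14 {A : Type*} [CommRing A] [Algebra ℚ A] (f : PowerSeries A)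
    (h0 : PowerSeries.constantCoeff (R := A) f = 0) (h1 : PowerSeries.coeff (R := A) 1 f = 1)
    (C : ℕ → Polynomial A) (hdeg : ∀ n, (C n).natDegree ≤ n - 1)
    (hC : ∀ k n, 1 ≤ n → PowerSeries.coeff (R := A) n (psIter f k) = (C n).eval (k : A)) :
    ∀ n, 1 ≤ n →
      ((∀ k : ℕ, (C n).eval ((k : A) + 1) - (C n).eval (k : A) =
        PowerSeries.coeff (R := A) n
          (∑ i ∈ Finset.Icc 2 n, PowerSeries.C (R := A) (PowerSeries.coeff (R := A) i f) *
            (PowerSeries.mk fun j => if 1 ≤ j then (C j).eval (k : A) else 0) ^ i)) ∧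
      ((C n).comp (Polynomial.X + 1) - C n).natDegree ≤ n - 2) := by
  have hconst : ∀ k, PowerSeries.constantCoeff (R := A) (psIter f k) = 0 := by
    intro k
    induction k with
    | zero => simp [psIter]
    | succ k ih =>
      rw [psIter, psComp, ← PowerSeries.coeff_zero_eq_constantCoeff_apply, PowerSeries.coeff_mk]
      rw [Finset.sum_range_one, pow_zero, PowerSeries.coeff_zero_eq_constantCoeff_apply, h0,
        zero_mul]
  intro n hn
  constructor
  · intro k
    have hg : psIter f k =
        PowerSeries.mk (fun j => if 1 ≤ j then (C j).eval (k : A) else 0) := by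
      ext j
      rw [PowerSeries.coeff_mk]
      rcases Nat.eq_zero_or_pos j with h | h
      · subst h
        simp [PowerSeries.coeff_zero_eq_constantCoeff_apply, hconst k]
      · have h' : 1 ≤ j := h
        rw [if_pos h']; exact hC k j h'
    have key : (C n).eval (((k + 1 : ℕ) : A)) =
        ∑ i ∈ Finset.range (n + 1),
          PowerSeries.coeff (R := A) i f * PowerSeries.coeff (R := A) n ((psIter f k) ^ i) := by
      rw [← hC (k + 1) n hn, psIter, psComp, PowerSeries.coeff_mk]
    have hsplit : Finset.range (n + 1) = insert 0 (insert 1 (Finset.Icc 2 n)) := by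
      ext i; simp [Finset.mem_range, Finset.mem_Icc]; omega
    rw [hsplit, Finset.sum_insert (by simp), Finset.sum_insert (by simp)] at key
    have t0 : PowerSeries.coeff (R := A) 0 f * PowerSeries.coeff (R := A) n ((psIter f k) ^ 0) = 0 := by
      rw [PowerSeries.coeff_zero_eq_constantCoeff_apply, h0, zero_mul]
    have t1 : PowerSeries.coeff (R := A) 1 f * PowerSeries.coeff (R := A) n ((psIter f k) ^ 1) =
        (C n).eval (k : A) := by
      rw [h1, one_mul, pow_one, hC k n hn]
    rw [t0, t1, zero_add] at key
    have hrhs : PowerSeries.coeff (R := A) n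
        (∑ i ∈ Finset.Icc 2 n, PowerSeries.C (R := A) (PowerSeries.coeff (R := A) i f) *
          (PowerSeries.mk fun j => if 1 ≤ j then (C j).eval (k : A) else 0) ^ i) =
        ∑ i ∈ Finset.Icc 2 n,
          PowerSeries.coeff (R := A) i f * PowerSeries.coeff (R := A) n ((psIter f k) ^ i) := by
      rw [map_sum]
      refine Finset.sum_congr rfl fun i _ => ?_
      rw [← hg, PowerSeries.coeff_C_mul]
    rw [hrhs]
    push_cast at key
    linear_combination key
  · calc ((C n).comp (Polynomial.X + 1) - C n).natDegree ≤ (C n).natDegree - 1 :=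
        delta_natDegree_le (C n)
      _ ≤ (n - 1) - 1 := Nat.sub_le_sub_right (hdeg n) 1
      _ ≤ n - 2 := by omega
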